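/- Uniqueness of the mean as Bregman minimizer: let O ⊆ ℝ^d be an open convex set, φ : O → ℝ strictly convex and continuously differentiable, and let U be an integrable ℝ^d-valued random variable taking values almost surely in O with E[U] ∈ O. Then for every x ∈ O with x ≠ E[U], E[ d_φ(U, x) − d_φ(U, E[U]) ] > 0; that is, E[U] is the unique minimizer of x ↦ E[d_φ(U, x)] over O. -/

import Mathlib

/-!
Expanding the divergences, the terms of `d_φ(U, x) - d_φ(U, E[U])` that are affine in `U`
integrate to their value at `E[U]`, so the expectation equals `d_φ(E[U], x)`. This is positive
by the strict first-order inequality for strictly convex functions, which follows from the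
one-variable slope inequality along the segment from `x` to `E[U]`.
-/

open scoped RealInnerProductSpace
open MeasureTheory

section Convexity

variable {E : Type*} [NormedAddCommGroup E] [NormedSpace ℝ E] {s : Set E} {f : E → ℝ}
  {f' : StrongDual ℝ E} {x y : E}

theorem ConvexOn.le_sub_of_hasFDerivAt (hf : ConvexOn ℝ s f) (hx : x ∈ s) (hy : y ∈ s)
    (hf' : HasFDerivAt f f' x) : f' (y - x) ≤ f y - f x := by
  have hline : HasDerivAt (f ∘ (AffineMap.lineMap x y : ℝ →ᵃ[ℝ] E)) (f' (y - x)) 0 := by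
    refine hf'.comp_hasDerivAt_of_eq (0 : ℝ) AffineMap.hasDerivAt_lineMap ?_
    simp
  have := (hf.comp_affineMap (AffineMap.lineMap x y)).le_slope_of_hasDerivAt
    (x := 0) (y := 1) (by simpa) (by simpa) one_pos hline
  simpa [slope_def_field] using this

theorem StrictConvexOn.lt_sub_of_hasFDerivAt (hf : StrictConvexOn ℝ s f) (hx : x ∈ s)
    (hy : y ∈ s) (hxy : x ≠ y) (hf' : HasFDerivAt f f' x) : f' (y - x) < f y - f x := by
  -- The non-strict inequality towards the midpoint, plus strict convexity at the midpoint.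
  have hmid : f (midpoint ℝ x y) < 2⁻¹ * f x + 2⁻¹ * f y := by
    simpa [midpoint_eq_smul_add] using
      hf.2 hx hy hxy (by norm_num : (0 : ℝ) < 2⁻¹) (by norm_num : (0 : ℝ) < 2⁻¹) (by norm_num)
  have hle := hf.convexOn.le_sub_of_hasFDerivAt hx (hf.1.midpoint_mem hx hy) hf'
  rw [midpoint_sub_left, map_smul, smul_eq_mul, invOf_eq_inv] at hle
  linarith

end Convexity

section Bregman

variable {E : Type*} [NormedAddCommGroup E] [InnerProductSpace ℝ E] [CompleteSpace E]

/-- `d_φ(u, v)`, with `g` in the role of `∇φ`. -/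
def bregmanDiv (φ : E → ℝ) (g : E → E) (u v : E) : ℝ :=
  φ u - φ v - ⟪u - v, g v⟫

theorem bregmanDiv_pos {s : Set E} {φ : E → ℝ} {g : E → E} (hφ : StrictConvexOn ℝ s φ)
    {u v : E} (hu : u ∈ s) (hv : v ∈ s) (huv : u ≠ v) (hg : HasGradientAt φ (g v) v) :
    0 < bregmanDiv φ g u v := by
  have := hφ.lt_sub_of_hasFDerivAt hv hu huv.symm hg.hasFDerivAt
  rw [InnerProductSpace.toDual_apply_apply, real_inner_comm] at this
  unfold bregmanDiv
  linarith

section Expectation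

variable {Ω : Type*} [MeasurableSpace Ω] {μ : Measure Ω}
  [IsProbabilityMeasure μ] {U : Ω → E}

theorem integral_inner_sub_const (hU : Integrable U μ) (c v : E) :
    ∫ ω, ⟪U ω - c, v⟫ ∂μ = ⟪(∫ ω, U ω ∂μ) - c, v⟫ := by
  simp_rw [real_inner_comm v]
  have hUc : Integrable (fun ω => U ω - c) μ := hU.sub (integrable_const c)
  rw [integral_inner hUc, integral_sub hU (integrable_const c),
    integral_const, probReal_univ, one_smul]

theorem integral_bregmanDiv_sub (hU : Integrable U μ) (φ : E → ℝ) (g : E → E) (x y : E) :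
    ∫ ω, (bregmanDiv φ g (U ω) x - bregmanDiv φ g (U ω) y) ∂μ
      = bregmanDiv φ g y x + ⟪(∫ ω, U ω ∂μ) - y, g y - g x⟫ := by
  have hx : Integrable (fun ω => ⟪U ω - x, g x⟫) μ := (hU.sub (integrable_const x)).inner_const _
  have hy : Integrable (fun ω => ⟪U ω - y, g y⟫) μ := (hU.sub (integrable_const y)).inner_const _
  have hrw : ∀ ω, bregmanDiv φ g (U ω) x - bregmanDiv φ g (U ω) y
      = (φ y - φ x) + (⟪U ω - y, g y⟫ - ⟪U ω - x, g x⟫) := fun ω => by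
    unfold bregmanDiv; ring
  have hyx : Integrable (fun ω => ⟪U ω - y, g y⟫ - ⟪U ω - x, g x⟫) μ := hy.sub hx
  simp_rw [hrw]
  rw [integral_add (integrable_const _) hyx, integral_sub hy hx, integral_const,
    integral_inner_sub_const hU, integral_inner_sub_const hU, probReal_univ, one_smul]
  unfold bregmanDiv
  rw [show (∫ ω, U ω ∂μ) - x = ((∫ ω, U ω ∂μ) - y) + (y - x) by abel, inner_add_left,
    inner_sub_right]
  ring

end Expectation

end Bregman

theorem bregman_mean_unique_minimizer_general {d : ℕ} {Ω : Type*} [MeasurableSpace Ω]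
    (μ : Measure Ω) [IsProbabilityMeasure μ]
    {O : Set (EuclideanSpace ℝ (Fin d))}
    {φ : EuclideanSpace ℝ (Fin d) → ℝ}
    {g : EuclideanSpace ℝ (Fin d) → EuclideanSpace ℝ (Fin d)}
    (hφ : StrictConvexOn ℝ O φ)
    (hg : ∀ v ∈ O, HasGradientAt φ (g v) v)
    (U : Ω → EuclideanSpace ℝ (Fin d))
    (hU : Integrable U μ)
    (hmean : (∫ ω, U ω ∂μ) ∈ O) :
    ∀ x ∈ O, x ≠ (∫ ω, U ω ∂μ) →
      0 < ∫ ω, ((φ (U ω) - φ x - ⟪U ω - x, g x⟫)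
          - (φ (U ω) - φ (∫ ω', U ω' ∂μ)
              - ⟪U ω - (∫ ω', U ω' ∂μ), g (∫ ω', U ω' ∂μ)⟫)) ∂μ := by
  intro x hx hxm
  change 0 < ∫ ω, (bregmanDiv φ g (U ω) x - bregmanDiv φ g (U ω) (∫ ω', U ω' ∂μ)) ∂μ
  rw [integral_bregmanDiv_sub hU, sub_self, inner_zero_left, add_zero]
  exact bregmanDiv_pos hφ hmean hx hxm.symm (hg x hx)

/-- Uniqueness of the mean as Bregman minimizer: for a strictly convex, continuously
differentiable `φ` (with gradient `g`) on an open convex set `O ⊆ ℝ^d` and an integrable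
random variable `U` taking values a.s. in `O` with `E[U] ∈ O`, for every `x ∈ O` with
`x ≠ E[U]`, `E[ d_φ(U, x) − d_φ(U, E[U]) ] > 0`; i.e. `E[U]` is the unique minimizer of
`x ↦ E[d_φ(U, x)]` over `O`. -/
theorem bregman_mean_unique_minimizer {d : ℕ} {Ω : Type*} [MeasurableSpace Ω]
    (μ : Measure Ω) [IsProbabilityMeasure μ]
    {O : Set (EuclideanSpace ℝ (Fin d))} (hO : IsOpen O) (hOconv : Convex ℝ O)
    {φ : EuclideanSpace ℝ (Fin d) → ℝ}
    {g : EuclideanSpace ℝ (Fin d) → EuclideanSpace ℝ (Fin d)}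
    (hφ : StrictConvexOn ℝ O φ)
    (hg : ∀ v ∈ O, HasGradientAt φ (g v) v)
    (hgcont : ContinuousOn g O)
    (U : Ω → EuclideanSpace ℝ (Fin d))
    (hU : Integrable U μ)
    (hUO : ∀ᵐ ω ∂μ, U ω ∈ O)
    (hmean : (∫ ω, U ω ∂μ) ∈ O) :
    ∀ x ∈ O, x ≠ (∫ ω, U ω ∂μ) →
      0 < ∫ ω, ((φ (U ω) - φ x - ⟪U ω - x, g x⟫)
          - (φ (U ω) - φ (∫ ω', U ω' ∂μ)
              - ⟪U ω - (∫ ω', U ω' ∂μ), g (∫ ω', U ω' ∂μ)⟫)) ∂μ :=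
  bregman_mean_unique_minimizer_general μ hφ hg U hU hmean
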